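/- arXiv:2108.13007 — 2 statements merged into one kernel-verified Lean document; each statement's English description precedes it below -/
import Mathlib

section
/- Let Ω be a finite subset of a locally finite weighted graph, with nonempty interior Ω°. Suppose u, û : V × [0,∞) → ℝ are continuously differentiable in t, both vanish on (V \ Ω°) × [0,∞), agree at t = 0, and both satisfy ∂_t u + |u|^{p−1} u = Δu on Ω° × [0,∞) for some p ≥ 1. Then u = û on V × [0,∞). -/
/-!
The energy `E(t) = ∑ₓ μ(x) (u - û)²(x,t)` is nonnegative, vanishes at `t = 0` and has derivative
`2 ∑ₓ μ w Δw - 2 ∑ₓ μ w (g(u) - g(û))`, where `w = u - û` and `g(s) = |s|^{p-1} s`. The first sum is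
`≤ 0` by summation by parts over the symmetric edge weights (`w` vanishes off `Ω°`), the second is
`≥ 0` because `g` is monotone. Hence `E` is nonincreasing, so `E ≡ 0` and `u = û`.
-/

open Finset Set

theorem monotone_abs_rpow_mul_self {q : ℝ} (hq : 0 ≤ q) : Monotone fun s : ℝ => |s| ^ q * s := by
  refine monotone_of_odd_of_monotoneOn_nonneg (fun s => by simp only [abs_neg, mul_neg]) ?_
  intro a ha b hb hab
  have habs : |a| ≤ |b| := by rwa [abs_of_nonneg ha, abs_of_nonneg hb]
  exact mul_le_mul (Real.rpow_le_rpow (abs_nonneg a) habs hq) hab ha (by positivity)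

theorem sum_sum_nonpos_of_add_swap_nonpos {ι K : Type*} [Field K] [LinearOrder K]
    [IsStrictOrderedRing K] (s : Finset ι) {F : ι → ι → K} (hF : ∀ i j, F i j + F j i ≤ 0) :
    ∑ i ∈ s, ∑ j ∈ s, F i j ≤ 0 := by
  have hsymm : ∑ i ∈ s, ∑ j ∈ s, (F i j + F j i) = 2 * ∑ i ∈ s, ∑ j ∈ s, F i j := by
    simp only [sum_add_distrib]
    rw [sum_comm (f := fun i j => F j i)]
    ring
  have : ∑ i ∈ s, ∑ j ∈ s, (F i j + F j i) ≤ 0 :=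
    sum_nonpos fun i _ => sum_nonpos fun j _ => hF i j
  linarith

theorem eq_zero_of_hasDerivAt_nonpos_of_nonneg {E E' : ℝ → ℝ}
    (hE : ∀ t, 0 ≤ t → HasDerivAt E (E' t) t) (hE' : ∀ t, 0 ≤ t → E' t ≤ 0)
    (hnonneg : ∀ t, 0 ≤ E t) (h0 : E 0 = 0) {t : ℝ} (ht : 0 ≤ t) : E t = 0 := by
  have hanti : AntitoneOn E (Ici 0) := by
    refine antitoneOn_of_hasDerivWithinAt_nonpos (f' := E') (convex_Ici 0)
      (fun s hs => (hE s hs).continuousAt.continuousWithinAt) (fun s hs => ?_) (fun s hs => ?_)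
    all_goals rw [interior_Ici] at hs
    · exact (hE s hs.le).hasDerivWithinAt
    · exact hE' s hs.le
  exact le_antisymm (h0 ▸ hanti self_mem_Ici ht ht) (hnonneg t)

section WeightedGraph

variable {V : Type*} (N : V → Finset V) (ω : V → V → ℝ)

theorem sum_mul_sum_neighbors_nonpos (hNsym : ∀ x y, x ∈ N y ↔ y ∈ N x)
    (hω : ∀ x, ∀ y ∈ N x, 0 ≤ ω x y) (hωsym : ∀ x y, ω x y = ω y x)
    {S : Finset V} {f : V → ℝ} (hf : ∀ x ∉ S, f x = 0) :
    ∑ x ∈ S, f x * ∑ y ∈ N x, ω x y * (f y - f x) ≤ 0 := by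
  classical
  set F : V → V → ℝ := fun x y => if y ∈ N x then f x * (ω x y * (f y - f x)) else 0
  -- an edge from `x ∈ S` to `y ∉ S` contributes `-ω x y * f x ^ 2 ≤ 0`, so it may be dropped
  have hrow : ∀ x, f x * ∑ y ∈ N x, ω x y * (f y - f x) ≤ ∑ y ∈ S, F x y := by
    intro x
    rw [sum_ite_mem, inter_comm S (N x), ← filter_mem_eq_inter, mul_sum,
      ← sum_filter_add_sum_filter_not (N x) (· ∈ S)]
    have hout : ∑ y ∈ N x with y ∉ S, f x * (ω x y * (f y - f x)) ≤ 0 :=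
      sum_nonpos fun y hy => by
        rw [mem_filter] at hy
        rw [hf y hy.2]
        nlinarith [mul_nonneg (hω x y hy.1) (sq_nonneg (f x))]
    linarith
  have hswap : ∀ x y, F x y + F y x ≤ 0 := by
    intro x y
    by_cases h : y ∈ N x
    · simp only [F, if_pos h, if_pos ((hNsym x y).2 h), hωsym y x]
      nlinarith [mul_nonneg (hω x y h) (sq_nonneg (f x - f y))]
    · simp [F, h, (hNsym x y).not.2 h]
  calc _ ≤ ∑ x ∈ S, ∑ y ∈ S, F x y := sum_le_sum fun x _ => hrow x
    _ ≤ 0 := sum_sum_nonpos_of_add_swap_nonpos S hswap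

noncomputable def graphLaplacian (μ f : V → ℝ) (x : V) : ℝ :=
  1 / μ x * ∑ y ∈ N x, ω x y * (f y - f x)

theorem graphLaplacian_sub (μ f g : V → ℝ) (x : V) :
    graphLaplacian N ω μ (f - g) x = graphLaplacian N ω μ f x - graphLaplacian N ω μ g x := by
  simp only [graphLaplacian, Pi.sub_apply, ← mul_sub, ← sum_sub_distrib]
  congr 1
  exact sum_congr rfl fun y _ => by ring

theorem sum_mul_mul_graphLaplacian_nonpos (hNsym : ∀ x y, x ∈ N y ↔ y ∈ N x)
    (hω : ∀ x, ∀ y ∈ N x, 0 ≤ ω x y) (hωsym : ∀ x y, ω x y = ω y x)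
    {μ : V → ℝ} (hμ : ∀ x, μ x ≠ 0) {S : Finset V} {f : V → ℝ} (hf : ∀ x ∉ S, f x = 0) :
    ∑ x ∈ S, μ x * f x * graphLaplacian N ω μ f x ≤ 0 := by
  convert sum_mul_sum_neighbors_nonpos N ω hNsym hω hωsym hf using 2 with x
  unfold graphLaplacian
  field_simp [hμ x]

theorem sum_mul_sub_mul_sub_nonpos (hNsym : ∀ x y, x ∈ N y ↔ y ∈ N x)
    (hω : ∀ x, ∀ y ∈ N x, 0 ≤ ω x y) (hωsym : ∀ x y, ω x y = ω y x)
    {μ : V → ℝ} (hμ : ∀ x, 0 < μ x) {g : ℝ → ℝ} (hg : Monotone g) {S : Finset V}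
    {a b a' b' : V → ℝ} (ha0 : ∀ x ∉ S, a x = 0) (hb0 : ∀ x ∉ S, b x = 0)
    (ha : ∀ x ∈ S, a' x + g (a x) = graphLaplacian N ω μ a x)
    (hb : ∀ x ∈ S, b' x + g (b x) = graphLaplacian N ω μ b x) :
    ∑ x ∈ S, μ x * ((a x - b x) * (a' x - b' x)) ≤ 0 := by
  have hΔ := sum_mul_mul_graphLaplacian_nonpos N ω hNsym hω hωsym (fun x => (hμ x).ne')
    (S := S) (f := a - b) fun x hx => by simp [ha0 x hx, hb0 x hx]
  have hmono : 0 ≤ ∑ x ∈ S, μ x * ((g (a x) - g (b x)) * (a x - b x)) :=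
    sum_nonneg fun x _ => mul_nonneg (hμ x).le <|
      (monovary_id_iff.2 hg).sub_mul_sub_nonneg (b x) (a x)
  calc ∑ x ∈ S, μ x * ((a x - b x) * (a' x - b' x))
      = ∑ x ∈ S, μ x * (a - b) x * graphLaplacian N ω μ (a - b) x
          - ∑ x ∈ S, μ x * ((g (a x) - g (b x)) * (a x - b x)) := by
        rw [← sum_sub_distrib]
        refine sum_congr rfl fun x hx => ?_
        rw [graphLaplacian_sub, ← ha x hx, ← hb x hx, Pi.sub_apply]
        ring
    _ ≤ 0 := by linarith

end WeightedGraph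

theorem heat_equation_uniqueness_general {V : Type*}
    (N : V → Finset V) (hNsym : ∀ x y, x ∈ N y ↔ y ∈ N x)
    (ω : V → V → ℝ) (hωpos : ∀ x, ∀ y ∈ N x, 0 < ω x y)
    (hωsym : ∀ x y, ω x y = ω y x)
    (μ : V → ℝ) (hμ : ∀ x, 0 < μ x)
    (int : Finset V)
    (p : ℝ) (hp : 1 ≤ p)
    (u v : V → ℝ → ℝ) (u' v' : V → ℝ → ℝ)
    (hud : ∀ x t, 0 ≤ t → HasDerivAt (u x) (u' x t) t)
    (hvd : ∀ x t, 0 ≤ t → HasDerivAt (v x) (v' x t) t)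
    (hu0 : ∀ x ∉ int, ∀ t, 0 ≤ t → u x t = 0)
    (hv0 : ∀ x ∉ int, ∀ t, 0 ≤ t → v x t = 0)
    (hinit : ∀ x, u x 0 = v x 0)
    (hueq : ∀ x ∈ int, ∀ t, 0 ≤ t →
      u' x t + |u x t| ^ (p - 1) * u x t
        = (1 / μ x) * ∑ y ∈ N x, ω x y * (u y t - u x t))
    (hveq : ∀ x ∈ int, ∀ t, 0 ≤ t →
      v' x t + |v x t| ^ (p - 1) * v x t
        = (1 / μ x) * ∑ y ∈ N x, ω x y * (v y t - v x t)) :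
    ∀ x, ∀ t, 0 ≤ t → u x t = v x t := by
  let E : ℝ → ℝ := fun t => ∑ x ∈ int, μ x * (u x t - v x t) ^ 2
  let E' : ℝ → ℝ := fun t => ∑ x ∈ int, μ x * ((u x t - v x t) * (u' x t - v' x t))
  have hE : ∀ t, 0 ≤ t → HasDerivAt E (2 * E' t) t := fun t ht => by
    refine (HasDerivAt.fun_sum fun x _ =>
      (((hud x t ht).sub (hvd x t ht)).pow 2).const_mul (μ x)).congr_deriv ?_
    simp only [E', mul_sum, Pi.sub_apply]
    exact sum_congr rfl fun x _ => by ring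
  have hE' : ∀ t, 0 ≤ t → E' t ≤ 0 := fun t ht =>
    sum_mul_sub_mul_sub_nonpos N ω hNsym (fun x y hy => (hωpos x y hy).le) hωsym hμ
      (monotone_abs_rpow_mul_self (by linarith)) (fun x hx => hu0 x hx t ht)
      (fun x hx => hv0 x hx t ht) (fun x hx => hueq x hx t ht) (fun x hx => hveq x hx t ht)
  have hterm_nonneg : ∀ t, ∀ x ∈ int, 0 ≤ μ x * (u x t - v x t) ^ 2 :=
    fun t x _ => mul_nonneg (hμ x).le (sq_nonneg _)
  have hE_zero : ∀ t, 0 ≤ t → E t = 0 := fun t ht =>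
    eq_zero_of_hasDerivAt_nonpos_of_nonneg hE (fun t ht => by linarith [hE' t ht])
      (fun t => sum_nonneg (hterm_nonneg t)) (by simp [E, hinit]) ht
  intro x t ht
  by_cases hx : x ∈ int
  · have hμx : μ x * (u x t - v x t) ^ 2 = 0 :=
      (sum_eq_zero_iff_of_nonneg (hterm_nonneg t)).1 (hE_zero t ht) x hx
    exact sub_eq_zero.1 <| pow_eq_zero_iff two_ne_zero |>.1 <|
      (mul_eq_zero.1 hμx).resolve_left (hμ x).ne'
  · rw [hu0 x hx t ht, hv0 x hx t ht]

/-- Uniqueness for the semilinear heat equation `∂ₜu + |u|^{p−1}u = Δu` on the interior of a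
finite subset `Ω` of a locally finite weighted graph: two `C¹`-in-time solutions vanishing
outside `Ω° × [0,∞)` that agree at `t = 0` agree everywhere. -/
theorem heat_equation_uniqueness {V : Type*}
    (N : V → Finset V) (hNsym : ∀ x y, x ∈ N y ↔ y ∈ N x)
    (ω : V → V → ℝ) (hωpos : ∀ x, ∀ y ∈ N x, 0 < ω x y)
    (hωsym : ∀ x y, ω x y = ω y x)
    (μ : V → ℝ) (hμ : ∀ x, 0 < μ x)
    (Ω int : Finset V)
    (hint : ∀ x, x ∈ int ↔ x ∈ Ω ∧ ∀ y ∈ N x, y ∈ Ω)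
    (hne : int.Nonempty)
    (p : ℝ) (hp : 1 ≤ p)
    (u v : V → ℝ → ℝ) (u' v' : V → ℝ → ℝ)
    (hud : ∀ x t, 0 ≤ t → HasDerivAt (u x) (u' x t) t)
    (hvd : ∀ x t, 0 ≤ t → HasDerivAt (v x) (v' x t) t)
    (hu0 : ∀ x ∉ int, ∀ t, 0 ≤ t → u x t = 0)
    (hv0 : ∀ x ∉ int, ∀ t, 0 ≤ t → v x t = 0)
    (hinit : ∀ x, u x 0 = v x 0)
    (hueq : ∀ x ∈ int, ∀ t, 0 ≤ t →
      u' x t + |u x t| ^ (p - 1) * u x t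
        = (1 / μ x) * ∑ y ∈ N x, ω x y * (u y t - u x t))
    (hveq : ∀ x ∈ int, ∀ t, 0 ≤ t →
      v' x t + |v x t| ^ (p - 1) * v x t
        = (1 / μ x) * ∑ y ∈ N x, ω x y * (v y t - v x t)) :
    ∀ x, ∀ t, 0 ≤ t → u x t = v x t :=
  heat_equation_uniqueness_general N hNsym ω hωpos hωsym μ hμ int p hp u v u' v' hud hvd hu0 hv0
    hinit hueq hveq
end

section
/- In the setting of the Lions–Stampacchia theorem with K = H a closed subspace: let a(v₁,v₂) = (1/ℓ)∑_{Ω°} v₁ v₂ μ − ∑_{Ω°} Δv₁ · v₂ μ on the space H_m of functions on a finite graph vanishing outside Ω°_m, with ℓ > 0. Then a is a coercive bilinear form: a(v,v) ≥ min{1/ℓ, 1}·‖v‖²_{W^{1,2}} for all v ∈ H_m, where ‖v‖²_{W^{1,2}} = ∑_{Ω_m}(Γ(v,v) + v²)μ. -/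
/-!
Writing `g x y = ω x y (v y - v x) v x`, symmetry of `ω` gives
`ω x y (v y - v x)² = -(g x y + g y x)`. Since `v` vanishes outside the interior, every edge
leaving `Ω_m` carries `g = 0` in both directions, so symmetry of the neighbourhood relation lets
one swap the two sums: this is the Green formula `∑ Γ(v,v) μ = -∑ Δv · v μ`. The coercivity
bound is then the termwise estimate `min (1/ℓ) 1 · (E + B) ≤ E + B/ℓ` for the nonnegative
energy `E` and mass `B`.
-/

open Finset

section GraphSums

variable {V : Type*} {N : V → Finset V}

theorem sum_sum_neighbors_inter_comm [DecidableEq V] (hNsym : ∀ x y, x ∈ N y ↔ y ∈ N x) (S : Finset V)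
    (f : V → V → ℝ) :
    ∑ x ∈ S, ∑ y ∈ N x ∩ S, f y x = ∑ x ∈ S, ∑ y ∈ N x ∩ S, f x y :=
  sum_comm' fun x y => by
    simp only [mem_inter, hNsym x y]
    tauto

theorem sum_sum_neighbors_comm (hNsym : ∀ x y, x ∈ N y ↔ y ∈ N x) {S : Finset V}
    {f : V → V → ℝ} (hf : ∀ x ∈ S, ∀ y ∈ N x, y ∉ S → f x y = 0 ∧ f y x = 0) :
    ∑ x ∈ S, ∑ y ∈ N x, f y x = ∑ x ∈ S, ∑ y ∈ N x, f x y := by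
  classical
  have restrict : ∀ g : V → V → ℝ, (∀ x ∈ S, ∀ y ∈ N x, y ∉ S → g x y = 0) →
      ∑ x ∈ S, ∑ y ∈ N x, g x y = ∑ x ∈ S, ∑ y ∈ N x ∩ S, g x y := fun g hg =>
    sum_congr rfl fun x hx => (sum_subset inter_subset_left fun y hy hyS =>
      hg x hx y hy fun h => hyS (mem_inter.mpr ⟨hy, h⟩)).symm
  rw [restrict (fun x y => f y x) fun x hx y hy hyS => (hf x hx y hy hyS).2,
    restrict f fun x hx y hy hyS => (hf x hx y hy hyS).1, sum_sum_neighbors_inter_comm hNsym]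

theorem sum_sum_neighbors_sq_sub_eq_neg_two_mul (hNsym : ∀ x y, x ∈ N y ↔ y ∈ N x)
    {ω : V → V → ℝ} (hωsym : ∀ x y, ω x y = ω y x) {S int : Finset V}
    (hint : ∀ x ∈ int, x ∈ S ∧ ∀ y ∈ N x, y ∈ S) {v : V → ℝ} (h0 : ∀ x ∉ int, v x = 0) :
    ∑ x ∈ S, ∑ y ∈ N x, ω x y * (v y - v x) ^ 2
      = -2 * ∑ x ∈ int, ∑ y ∈ N x, ω x y * (v y - v x) * v x := by
  set g : V → V → ℝ := fun x y => ω x y * (v y - v x) * v x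
  have hsplit : ∀ x y, ω x y * (v y - v x) ^ 2 = -(g x y + g y x) := fun x y => by
    simp only [g, hωsym y x]
    ring
  have hswap : ∑ x ∈ S, ∑ y ∈ N x, g y x = ∑ x ∈ S, ∑ y ∈ N x, g x y := by
    refine sum_sum_neighbors_comm hNsym fun x _ y hy hyS => ?_
    have hvy : v y = 0 := h0 y fun hyi => hyS (hint y hyi).1
    have hvx : v x = 0 := h0 x fun hxi => hyS ((hint x hxi).2 y hy)
    simp [g, hvx, hvy]
  have hrestrict : ∑ x ∈ S, ∑ y ∈ N x, g x y = ∑ x ∈ int, ∑ y ∈ N x, g x y :=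
    (sum_subset (fun x hx => (hint x hx).1) fun x _ hx => by simp [g, h0 x hx]).symm
  simp only [hsplit, sum_neg_distrib, sum_add_distrib, hswap, hrestrict]
  ring

end GraphSums

theorem min_mul_add_le_of_nonneg {a b A B : ℝ} (hA : 0 ≤ A) (hB : 0 ≤ B) :
    min a b * (A + B) ≤ b * A + a * B := by
  nlinarith [min_le_left a b, min_le_right a b]

theorem bilinear_form_coercive_general {V : Type*}
    (N : V → Finset V) (hNsym : ∀ x y, x ∈ N y ↔ y ∈ N x)
    (ω : V → V → ℝ) (hωpos : ∀ x, ∀ y ∈ N x, 0 < ω x y)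
    (hωsym : ∀ x y, ω x y = ω y x)
    (μ : V → ℝ) (hμ : ∀ x, 0 < μ x)
    (Ωm int : Finset V)
    (hint : ∀ x, x ∈ int ↔ x ∈ Ωm ∧ ∀ y ∈ N x, y ∈ Ωm)
    (ℓ : ℝ)
    (v : V → ℝ) (h0 : ∀ x ∉ int, v x = 0) :
    min (1 / ℓ) 1 *
        ∑ x ∈ Ωm, (((1 / (2 * μ x)) * ∑ y ∈ N x, ω x y * (v y - v x) ^ 2) + v x ^ 2) * μ x
      ≤ (1 / ℓ) * ∑ x ∈ int, v x * v x * μ x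
        - ∑ x ∈ int, ((1 / μ x) * ∑ y ∈ N x, ω x y * (v y - v x)) * v x * μ x := by
  have hint' : ∀ x ∈ int, x ∈ Ωm ∧ ∀ y ∈ N x, y ∈ Ωm := fun x => (hint x).1
  have hgreen := sum_sum_neighbors_sq_sub_eq_neg_two_mul hNsym hωsym hint' h0
  have hmass : ∑ x ∈ Ωm, v x ^ 2 * μ x = ∑ x ∈ int, v x * v x * μ x :=
    (sum_subset (fun x hx => (hint' x hx).1) fun x _ hx => by simp [h0 x hx]).symm.trans
      (sum_congr rfl fun x _ => by ring)
  have hsplit : ∑ x ∈ Ωm, (((1 / (2 * μ x)) * ∑ y ∈ N x, ω x y * (v y - v x) ^ 2) + v x ^ 2) * μ x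
      = (1 / 2) * ∑ x ∈ Ωm, ∑ y ∈ N x, ω x y * (v y - v x) ^ 2
        + ∑ x ∈ int, v x * v x * μ x := by
    rw [← hmass, mul_sum, ← sum_add_distrib]
    refine sum_congr rfl fun x _ => ?_
    field_simp [(hμ x).ne']
  have hlap : ∑ x ∈ int, ((1 / μ x) * ∑ y ∈ N x, ω x y * (v y - v x)) * v x * μ x
      = ∑ x ∈ int, ∑ y ∈ N x, ω x y * (v y - v x) * v x := by
    refine sum_congr rfl fun x _ => ?_
    rw [← sum_mul]
    field_simp [(hμ x).ne']
  have henergy_nonneg : 0 ≤ ∑ x ∈ Ωm, ∑ y ∈ N x, ω x y * (v y - v x) ^ 2 :=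
    sum_nonneg fun x _ => sum_nonneg fun y hy => mul_nonneg (hωpos x y hy).le (sq_nonneg _)
  have hmass_nonneg : 0 ≤ ∑ x ∈ int, v x * v x * μ x :=
    sum_nonneg fun x _ => mul_nonneg (mul_self_nonneg _) (hμ x).le
  rw [hsplit, hlap]
  linarith [min_mul_add_le_of_nonneg (a := 1 / ℓ) (b := 1)
    (mul_nonneg one_half_pos.le henergy_nonneg) hmass_nonneg]

/-- Coercivity of the bilinear form `a(v₁,v₂) = (1/ℓ)∑_{Ω°} v₁v₂ μ − ∑_{Ω°} Δv₁·v₂ μ` on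
functions vanishing outside the interior `Ω°_m` of a finite set `Ω_m`:
`a(v,v) ≥ min{1/ℓ, 1} · ‖v‖²_{W^{1,2}(Ω_m)}`, where
`‖v‖²_{W^{1,2}} = ∑_{Ω_m}(Γ(v,v) + v²)μ`. -/
theorem bilinear_form_coercive {V : Type*}
    (N : V → Finset V) (hNsym : ∀ x y, x ∈ N y ↔ y ∈ N x)
    (ω : V → V → ℝ) (hωpos : ∀ x, ∀ y ∈ N x, 0 < ω x y)
    (hωsym : ∀ x y, ω x y = ω y x)
    (μ : V → ℝ) (hμ : ∀ x, 0 < μ x)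
    (Ωm int : Finset V)
    (hint : ∀ x, x ∈ int ↔ x ∈ Ωm ∧ ∀ y ∈ N x, y ∈ Ωm)
    (ℓ : ℝ) (hℓ : 0 < ℓ)
    (v : V → ℝ) (h0 : ∀ x ∉ int, v x = 0) :
    min (1 / ℓ) 1 *
        ∑ x ∈ Ωm, (((1 / (2 * μ x)) * ∑ y ∈ N x, ω x y * (v y - v x) ^ 2) + v x ^ 2) * μ x
      ≤ (1 / ℓ) * ∑ x ∈ int, v x * v x * μ x
        - ∑ x ∈ int, ((1 / μ x) * ∑ y ∈ N x, ω x y * (v y - v x)) * v x * μ x :=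
  bilinear_form_coercive_general N hNsym ω hωpos hωsym μ hμ Ωm int hint ℓ v h0
end
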